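/- Let G be a connected half-transitive multigraph with bipartition V₁ ∪ V₂ and δ(G) ≥ 2μ(G). If G is not λ'-optimal (λ'(G) < ξ(G)) and A is a λ'-atom of G, then |A| ≥ 3. -/

import Mathlib

/-- A multigraph: multiple edges allowed (recorded as edge multiplicities), no loops. -/
structure Multigraph (V : Type*) where
  mult : V → V → ℕ
  symm : ∀ u v, mult u v = mult v u
  loopless : ∀ v, mult v v = 0

namespace Multigraph

variable {V : Type*}

/-- Adjacency: at least one edge between `u` and `v`. -/
def Adj (G : Multigraph V) (u v : V) : Prop := 0 < G.mult u v

instance (G : Multigraph V) (v : V) : DecidablePred (G.Adj v) :=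
  fun u => inferInstanceAs (Decidable (0 < G.mult v u))

/-- Reachability by walks. -/
def Reachable (G : Multigraph V) : V → V → Prop := Relation.ReflTransGen G.Adj

/-- A multigraph is connected if it is nonempty and every two vertices are joined by a walk. -/
def Connected (G : Multigraph V) : Prop := Nonempty V ∧ ∀ u v, G.Reachable u v

/-- An automorphism of a multigraph: a permutation preserving all edge multiplicities. -/
def Aut (G : Multigraph V) : Type _ :=
  {e : Equiv.Perm V // ∀ u v, G.mult (e u) (e v) = G.mult u v}

/-- A set of edges of `G`, given by sub-multiplicities. -/
structure EdgeSub (G : Multigraph V) where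
  f : V → V → ℕ
  symm : ∀ u v, f u v = f v u
  le : ∀ u v, f u v ≤ G.mult u v

/-- The multigraph obtained by deleting the edge set `F`. -/
def deleteEdges (G : Multigraph V) (F : G.EdgeSub) : Multigraph V where
  mult u v := G.mult u v - F.f u v
  symm u v := by rw [G.symm u v, F.symm u v]
  loopless v := by simp [G.loopless v]

/-- `F` is an edge-cut if removing it disconnects `G`. -/
def IsEdgeCut (G : Multigraph V) (F : G.EdgeSub) : Prop := ¬ (G.deleteEdges F).Connected

/-- `F` is a restricted edge-cut if removing it disconnects `G` and leaves no isolated vertex. -/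
def IsRestrictedEdgeCut (G : Multigraph V) (F : G.EdgeSub) : Prop :=
  G.IsEdgeCut F ∧ ∀ v, ∃ u, (G.deleteEdges F).Adj v u

/-- `G` is bipartite with parts `V₁`, `V₂`. -/
def IsBipartition [DecidableEq V] [Fintype V] (G : Multigraph V) (V₁ V₂ : Finset V) : Prop :=
  Disjoint V₁ V₂ ∧ V₁ ∪ V₂ = Finset.univ ∧ ∀ u v, G.Adj u v → (u ∈ V₁ ↔ v ∈ V₂)

/-- A bipartite multigraph is half-transitive if `Aut G` is transitive on each part. -/
def IsHalfTransitive [DecidableEq V] [Fintype V] (G : Multigraph V) (V₁ V₂ : Finset V) : Prop :=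
  G.IsBipartition V₁ V₂ ∧
  (∀ u ∈ V₁, ∀ v ∈ V₁, ∃ e : G.Aut, e.1 u = v) ∧
  (∀ u ∈ V₂, ∀ v ∈ V₂, ∃ e : G.Aut, e.1 u = v)

/-- An imprimitive block for `Aut G`. -/
def IsImprimitiveBlock [DecidableEq V] (G : Multigraph V) (A : Finset V) [Fintype V] : Prop :=
  A.Nonempty ∧ A ≠ Finset.univ ∧
  ∀ e : G.Aut, A.image e.1 = A ∨ Disjoint (A.image e.1) A

/-- The induced sub-multigraph on a vertex set `S`. -/
def induce (G : Multigraph V) (S : Finset V) : Multigraph {x // x ∈ S} where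
  mult a b := G.mult a.1 b.1
  symm a b := G.symm a.1 b.1
  loopless a := G.loopless a.1

section Fin

variable [Fintype V] [DecidableEq V]

/-- The degree of a vertex (counting multiplicities). -/
def degree (G : Multigraph V) (v : V) : ℕ := ∑ u, G.mult v u

/-- The minimum degree `δ(G)`. -/
noncomputable def minDegree (G : Multigraph V) : ℕ := sInf {n | ∃ v, G.degree v = n}

/-- The maximum edge multiplicity `μ(G)`. -/
def maxMult (G : Multigraph V) : ℕ := Finset.univ.sup fun p : V × V => G.mult p.1 p.2

/-- `d(A)`: the number of edges between `A` and its complement. -/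
def cut (G : Multigraph V) (A : Finset V) : ℕ := ∑ u ∈ A, ∑ v ∈ Aᶜ, G.mult u v

/-- The number of edges in an edge set. -/
def EdgeSub.card {G : Multigraph V} (F : G.EdgeSub) : ℕ := (∑ u, ∑ v, F.f u v) / 2

/-- The edge-boundary `N(A)` of a vertex set `A`, as an edge set. -/
def boundary (G : Multigraph V) (A : Finset V) : G.EdgeSub where
  f u v := if (u ∈ A ∧ v ∉ A) ∨ (v ∈ A ∧ u ∉ A) then G.mult u v else 0
  symm u v := by
    try dsimp only
    by_cases h1 : u ∈ A <;> by_cases h2 : v ∈ A <;> simp [h1, h2, G.symm u v]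
  le u v := by split_ifs <;> simp

/-- The edge-connectivity `λ(G)`. -/
noncomputable def edgeConn (G : Multigraph V) : ℕ :=
  sInf {n | ∃ F : G.EdgeSub, G.IsEdgeCut F ∧ F.card = n}

/-- The restricted edge-connectivity `λ'(G)`. -/
noncomputable def rEdgeConn (G : Multigraph V) : ℕ :=
  sInf {n | ∃ F : G.EdgeSub, G.IsRestrictedEdgeCut F ∧ F.card = n}

/-- The minimum edge degree `ξ(G) = min {d(u)+d(v)-2μ(uv) : uv ∈ E}`. -/
noncomputable def minEdgeDegree (G : Multigraph V) : ℕ :=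
  sInf {n | ∃ u v, G.Adj u v ∧ n = G.degree u + G.degree v - 2 * G.mult u v}

/-- A `λ`-fragment: a vertex set whose edge-boundary is a minimum edge-cut. -/
def IsFragment (G : Multigraph V) (A : Finset V) : Prop :=
  A.Nonempty ∧ Aᶜ.Nonempty ∧ G.IsEdgeCut (G.boundary A) ∧ G.cut A = G.edgeConn

/-- A `λ`-atom: a `λ`-fragment of minimum cardinality. -/
def IsAtom (G : Multigraph V) (A : Finset V) : Prop :=
  G.IsFragment A ∧ ∀ B : Finset V, G.IsFragment B → A.card ≤ B.card

/-- A strict `λ`-fragment: a `λ`-fragment `C` with `2 ≤ |C| ≤ |V| - 2`. -/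
def IsStrictFragment (G : Multigraph V) (A : Finset V) : Prop :=
  G.IsFragment A ∧ 2 ≤ A.card ∧ A.card ≤ Fintype.card V - 2

/-- A `λ`-superatom: a strict `λ`-fragment of minimum cardinality. -/
def IsSuperAtom (G : Multigraph V) (A : Finset V) : Prop :=
  G.IsStrictFragment A ∧ ∀ B : Finset V, G.IsStrictFragment B → A.card ≤ B.card

/-- A `λ'`-fragment: a vertex set whose edge-boundary is a minimum restricted edge-cut. -/
def IsRFragment (G : Multigraph V) (A : Finset V) : Prop :=
  G.IsRestrictedEdgeCut (G.boundary A) ∧ G.cut A = G.rEdgeConn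

/-- A `λ'`-atom: a `λ'`-fragment of minimum cardinality. -/
def IsRAtom (G : Multigraph V) (A : Finset V) : Prop :=
  G.IsRFragment A ∧ ∀ B : Finset V, G.IsRFragment B → A.card ≤ B.card

/-- `G` is super edge-connected if every minimum edge-cut is the set of all edges
incident with some vertex. -/
def IsSuperEdgeConnected (G : Multigraph V) : Prop :=
  ∀ F : G.EdgeSub, G.IsEdgeCut F → F.card = G.edgeConn →
    ∃ v : V, ∀ u w : V, F.f u w = if u = v ∨ w = v then G.mult u w else 0

end Fin

end Multigraph

/-! Deleting `∂A` leaves every vertex of a `λ'`-fragment `A` with a neighbour, which must then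
lie in `A`; and `A` is nonempty because `G` is connected. Hence `|A| ≥ 2`. If `A = {u, v}`, then
`|∂A| = d(u) + d(v) - 2μ(uv) ≥ ξ(G)`, contradicting `λ'(G) < ξ(G)`. -/

namespace Multigraph

variable {V : Type*} {G : Multigraph V} {A : Finset V}

theorem Adj.ne {u v : V} (h : G.Adj u v) : u ≠ v := by
  rintro rfl
  simp [Adj, G.loopless] at h

theorem minEdgeDegree_le [Fintype V] {u v : V} (h : G.Adj u v) :
    G.minEdgeDegree ≤ G.degree u + G.degree v - 2 * G.mult u v :=
  Nat.sInf_le ⟨u, v, h, rfl⟩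

theorem sum_degree_eq_sum_mult_add_cut [Fintype V] [DecidableEq V] (G : Multigraph V)
    (A : Finset V) :
    ∑ u ∈ A, G.degree u = ∑ u ∈ A, ∑ v ∈ A, G.mult u v + G.cut A := by
  simp only [degree, cut, ← Finset.sum_add_distrib, Finset.sum_add_sum_compl]

theorem cut_pair_add_two_mul_mult [Fintype V] [DecidableEq V] {u v : V} (huv : u ≠ v) :
    G.cut {u, v} + 2 * G.mult u v = G.degree u + G.degree v := by
  have h := G.sum_degree_eq_sum_mult_add_cut {u, v}
  simp only [Finset.sum_pair huv, G.loopless, G.symm v u] at h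
  omega

theorem deleteEdges_boundary_empty [DecidableEq V] (G : Multigraph V) :
    G.deleteEdges (G.boundary ∅) = G := by
  cases G
  simp [deleteEdges, boundary]

theorem Connected.nonempty_of_isEdgeCut_boundary [DecidableEq V] (hG : G.Connected)
    (hcut : G.IsEdgeCut (G.boundary A)) : A.Nonempty := by
  rw [Finset.nonempty_iff_ne_empty]
  rintro rfl
  exact hcut (G.deleteEdges_boundary_empty ▸ hG)

theorem mem_and_adj_of_adj_deleteEdges_boundary [DecidableEq V] {x y : V} (hx : x ∈ A)
    (h : (G.deleteEdges (G.boundary A)).Adj x y) : y ∈ A ∧ G.Adj x y := by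
  by_cases hy : y ∈ A <;> simp_all [Adj, deleteEdges, boundary]

theorem exists_adj_mem_of_isRestrictedEdgeCut_boundary [DecidableEq V]
    (h : G.IsRestrictedEdgeCut (G.boundary A)) {x : V} (hx : x ∈ A) :
    ∃ y ∈ A, y ≠ x ∧ G.Adj x y := by
  obtain ⟨y, hxy⟩ := h.2 x
  obtain ⟨hy, hadj⟩ := mem_and_adj_of_adj_deleteEdges_boundary hx hxy
  exact ⟨y, hy, hadj.ne.symm, hadj⟩

theorem IsRFragment.three_le_card [Fintype V] [DecidableEq V] (hG : G.Connected)
    (hopt : G.rEdgeConn < G.minEdgeDegree) (hA : G.IsRFragment A) : 3 ≤ A.card := by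
  obtain ⟨hrcut, hval⟩ := hA
  obtain ⟨x, hx⟩ := hG.nonempty_of_isEdgeCut_boundary hrcut.1
  obtain ⟨y, hy, hyx, hxy⟩ := exists_adj_mem_of_isRestrictedEdgeCut_boundary hrcut hx
  by_contra! hcard
  have hpair : {x, y} = A := Finset.eq_of_subset_of_card_le
    (Finset.insert_subset hx (Finset.singleton_subset_iff.mpr hy))
    (by rw [Finset.card_pair hyx.symm]; omega)
  have hξ := minEdgeDegree_le hxy
  have hcutA := cut_pair_add_two_mul_mult (G := G) hyx.symm
  rw [hpair] at hcutA
  omega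

end Multigraph

variable {V : Type*} [Fintype V] [DecidableEq V]

open Multigraph

theorem rAtom_card_ge_three_general (G : Multigraph V)
    (hG : G.Connected)
    (hopt : G.rEdgeConn < G.minEdgeDegree)
    (A : Finset V) (hA : G.IsRAtom A) :
    3 ≤ A.card :=
  hA.1.three_le_card hG hopt

/-- In a connected half-transitive multigraph with `δ(G) ≥ 2μ(G)` which is not `λ'`-optimal,
every `λ'`-atom has at least three vertices. -/
theorem rAtom_card_ge_three (G : Multigraph V) (V₁ V₂ : Finset V)
    (hG : G.Connected) (hht : G.IsHalfTransitive V₁ V₂)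
    (hδ : 2 * G.maxMult ≤ G.minDegree)
    (hopt : G.rEdgeConn < G.minEdgeDegree)
    (A : Finset V) (hA : G.IsRAtom A) :
    3 ≤ A.card :=
  rAtom_card_ge_three_general G hG hopt A hA
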